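/- Provided f ∈ H¹(0,T; 𝓗), any solution w of D_w w = −f fulfills, for all t ∈ (0,T), the energy estimate E₁[w](t) + b̌₁ ∫₀ᵗ (‖w_ttt(τ)‖² + ‖𝒜^{1/2}w_tt(τ)‖² + ‖𝒜w_t(τ)‖² + ‖𝒜w(τ)‖²) dτ ≤ č₁ ( E₁[w](0) + ∫₀ᵗ (‖f_t(τ)‖² + ‖f(τ)‖²) dτ ), where b̌₁ > 0 is sufficiently small and č₁ > 0 is sufficiently large. -/

import Mathlib

/-
Testing `w'' + b𝒜w' + c²𝒜w = -f` with `𝒜w'`, and its time derivative with `𝒜w''`, shows (by the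
symmetry of `𝒜` and Young's inequality) that `½(⟪𝒜w'', w''⟫ + c²‖𝒜w'‖² + ⟪𝒜w', w'⟫ + c²‖𝒜w‖²)`,
an energy equivalent to `E₁`, decreases at rate `b/2 (‖𝒜w''‖² + ‖𝒜w'‖²)` up to `‖f'‖² + ‖f‖²`.
The other dissipated quantities are read off from the two equations, since `‖w''‖ ≲ ‖𝒜w''‖`:
`𝒜` is coercive, because the infimum of its numerical range lies in its spectrum.
-/

open MeasureTheory
open scoped RealInnerProductSpace

/-- The Westervelt energy `E₁[w](t) = ½(‖𝒜^{1/2}w_tt‖² + ‖𝒜^{1/2}w_t‖² + ‖𝒜w‖²)`. -/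
noncomputable def E1 {H : Type*} [NormedAddCommGroup H] [InnerProductSpace ℝ H]
    (A Ahalf : H →L[ℝ] H) (w : ℝ → H) (t : ℝ) : ℝ :=
  (1/2) * (‖Ahalf (iteratedDeriv 2 w t)‖^2 + ‖Ahalf (deriv w t)‖^2 + ‖A (w t)‖^2)

open Set

theorem ContDiff.hasDerivAt_iteratedDeriv {𝕜 E : Type*} [NontriviallyNormedField 𝕜]
    [NormedAddCommGroup E] [NormedSpace 𝕜 E] {n : WithTop ℕ∞} {f : 𝕜 → E} (hf : ContDiff 𝕜 n f)
    {k : ℕ} (hk : k < n) (x : 𝕜) :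
    HasDerivAt (iteratedDeriv k f) (iteratedDeriv (k + 1) f x) x := by
  rw [iteratedDeriv_succ]
  exact (hf.differentiable_iteratedDeriv k hk x).hasDerivAt

theorem norm_add₃_sq_le {E : Type*} [SeminormedAddCommGroup E] (x y z : E) :
    ‖x + y + z‖ ^ 2 ≤ 3 * (‖x‖ ^ 2 + ‖y‖ ^ 2 + ‖z‖ ^ 2) := by
  have := norm_add₃_le (a := x) (b := y) (c := z)
  nlinarith [norm_nonneg (x + y + z), sq_nonneg (‖x‖ - ‖y‖), sq_nonneg (‖y‖ - ‖z‖),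
    sq_nonneg (‖x‖ - ‖z‖)]

theorem norm_smul_sq {E : Type*} [SeminormedAddCommGroup E] [NormedSpace ℝ E] (r : ℝ) (x : E) :
    ‖r • x‖ ^ 2 = r ^ 2 * ‖x‖ ^ 2 := by
  rw [norm_smul, mul_pow, Real.norm_eq_abs, sq_abs]

section

variable {H : Type*} [NormedAddCommGroup H] [InnerProductSpace ℝ H]

namespace ContinuousLinearMap

theorem IsPositive.norm_apply_sq_le {B : H →L[ℝ] H} (hB : B.IsPositive) (x : H) :
    ‖B x‖ ^ 2 ≤ ‖B‖ * ⟪B x, x⟫ := by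
  let β : LinearMap.BilinForm ℝ H := (innerₗ H).comp (B : H →ₗ[ℝ] H)
  have hβ : ∀ y z, β y z = ⟪B y, z⟫ := fun _ _ => rfl
  have hsymm : LinearMap.IsSymm β := LinearMap.isSymm_def.2 fun y z => by
    rw [RingHom.id_apply, hβ, hβ, hB.isSymmetric.apply_clm, real_inner_comm]
  have hcs := β.apply_sq_le_of_symm (fun y => hB.inner_nonneg_left y) hsymm x (B x)
  simp only [hβ, real_inner_self_eq_norm_sq] at hcs
  have hBB : ⟪B (B x), B x⟫ ≤ ‖B‖ * ‖B x‖ ^ 2 := by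
    calc ⟪B (B x), B x⟫ ≤ ‖B (B x)‖ * ‖B x‖ := real_inner_le_norm _ _
      _ ≤ ‖B‖ * ‖B x‖ * ‖B x‖ := by gcongr; exact B.le_opNorm _
      _ = ‖B‖ * ‖B x‖ ^ 2 := by ring
  rcases (sq_nonneg ‖B x‖).eq_or_lt with h0 | hpos
  · rw [← h0]; exact mul_nonneg (norm_nonneg _) (hB.inner_nonneg_left x)
  · refine le_of_mul_le_mul_right ?_ hpos
    nlinarith [mul_le_mul_of_nonneg_left hBB (hB.inner_nonneg_left x)]

theorem IsPositive.exists_pos_mul_sq_le_inner_of_isUnit {B : H →L[ℝ] H} (hB : B.IsPositive)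
    (hu : IsUnit B) : ∃ m > 0, ∀ x, m * ‖x‖ ^ 2 ≤ ⟪B x, x⟫ := by
  obtain ⟨V, hV⟩ := hu.exists_left_inv
  refine ⟨(‖V‖ ^ 2 * ‖B‖ + 1)⁻¹, by positivity, fun x => ?_⟩
  have hx : ‖x‖ ≤ ‖V‖ * ‖B x‖ := by
    calc ‖x‖ = ‖V (B x)‖ := by simpa using congrArg norm (DFunLike.congr_fun hV x).symm
      _ ≤ ‖V‖ * ‖B x‖ := V.le_opNorm _
  have hx2 : ‖x‖ ^ 2 ≤ ‖V‖ ^ 2 * ‖B‖ * ⟪B x, x⟫ := by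
    calc ‖x‖ ^ 2 ≤ (‖V‖ * ‖B x‖) ^ 2 := by gcongr
      _ = ‖V‖ ^ 2 * ‖B x‖ ^ 2 := by ring
      _ ≤ ‖V‖ ^ 2 * (‖B‖ * ⟪B x, x⟫) := by gcongr; exact hB.norm_apply_sq_le x
      _ = ‖V‖ ^ 2 * ‖B‖ * ⟪B x, x⟫ := by ring
  rw [inv_mul_le_iff₀ (by positivity)]
  linarith [hB.inner_nonneg_left x]

theorem exists_pos_mul_sq_le_inner_of_spectrum_subset_Ioi {A : H →L[ℝ] H}
    (hA : (A : H →ₗ[ℝ] H).IsSymmetric) (hspec : spectrum ℝ A ⊆ Ioi 0) :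
    ∃ m > 0, ∀ x, m * ‖x‖ ^ 2 ≤ ⟪A x, x⟫ := by
  rcases subsingleton_or_nontrivial H with _ | _
  · exact ⟨1, one_pos, fun x => by simp [Subsingleton.elim x 0]⟩
  set s := ⨅ x : {x : H // x ≠ 0}, A.rayleighQuotient x
  have hbdd : BddBelow (range fun x : {x : H // x ≠ 0} => A.rayleighQuotient x) :=
    ⟨-‖A‖, by rintro _ ⟨x, rfl⟩; exact neg_le_of_abs_le (A.rayleighQuotient_le_norm x)⟩
  have hs : ∀ x, s * ‖x‖ ^ 2 ≤ ⟪A x, x⟫ := by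
    intro x
    rcases eq_or_ne x 0 with rfl | hx
    · simp
    have := ciInf_le hbdd ⟨x, hx⟩
    rwa [rayleighQuotient, reApplyInnerSelf_apply, RCLike.re_to_real,
      le_div_iff₀ (by positivity)] at this
  have hpos : (A - algebraMap ℝ (H →L[ℝ] H) s).IsPositive := by
    refine (isPositive_iff _).2 ⟨fun x y => ?_, fun x => ?_⟩
    · simp only [coe_coe, sub_apply, algebraMap_apply, inner_sub_left, inner_sub_right,
        real_inner_smul_left, real_inner_smul_right, hA.apply_clm]
    · simp only [sub_apply, algebraMap_apply, inner_sub_left, real_inner_smul_left,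
        real_inner_self_eq_norm_sq]
      linarith [hs x]
  -- `s` lies in the spectrum: otherwise `A - s` would be coercive, contradicting `s = inf`.
  have hmem : s ∈ spectrum ℝ A := by
    by_contra h
    rw [spectrum.notMem_iff, ← IsUnit.neg_iff, neg_sub] at h
    obtain ⟨m, hm, hcoer⟩ := hpos.exists_pos_mul_sq_le_inner_of_isUnit h
    obtain ⟨y, hy⟩ := exists_ne (0 : H)
    have : Nonempty {x : H // x ≠ 0} := ⟨⟨y, hy⟩⟩
    obtain ⟨⟨x, hx⟩, hlt⟩ := exists_lt_of_ciInf_lt (lt_add_of_pos_right s hm)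
    rw [rayleighQuotient, reApplyInnerSelf_apply, RCLike.re_to_real,
      div_lt_iff₀ (by positivity)] at hlt
    have := hcoer x
    simp only [sub_apply, algebraMap_apply, inner_sub_left, real_inner_smul_left,
      real_inner_self_eq_norm_sq] at this
    linarith
  exact ⟨s, hspec hmem, hs⟩

end ContinuousLinearMap

theorem norm_apply_sq_eq_inner_of_comp_self {A S : H →L[ℝ] H}
    (hS : (S : H →ₗ[ℝ] H).IsSymmetric) (hSS : ∀ x, S (S x) = A x) (x : H) :
    ‖S x‖ ^ 2 = ⟪A x, x⟫ := by
  rw [← real_inner_self_eq_norm_sq, hS.apply_clm, hSS, real_inner_comm]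

theorem mul_norm_le_norm_apply_of_coercive {A : H →L[ℝ] H} {m : ℝ}
    (hcoer : ∀ x, m * ‖x‖ ^ 2 ≤ ⟪A x, x⟫) (x : H) : m * ‖x‖ ≤ ‖A x‖ := by
  rcases (norm_nonneg x).eq_or_lt with h0 | hpos
  · rw [← h0, mul_zero]; exact norm_nonneg _
  · have := (hcoer x).trans (real_inner_le_norm (A x) x)
    nlinarith

noncomputable def dampedWaveEnergy (A : H →L[ℝ] H) (c : ℝ) (u v : H) : ℝ :=
  (⟪A v, v⟫ + c ^ 2 * ‖A u‖ ^ 2) / 2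

theorem hasDerivAt_dampedWaveEnergy {A : H →L[ℝ] H} (hA : (A : H →ₗ[ℝ] H).IsSymmetric)
    (c : ℝ) {u v : ℝ → H} {v' : H} {τ : ℝ} (hu : HasDerivAt u (v τ) τ)
    (hv : HasDerivAt v v' τ) :
    HasDerivAt (fun s => dampedWaveEnergy A c (u s) (v s))
      (⟪A v', v τ⟫ + c ^ 2 * ⟪A (u τ), A (v τ)⟫) τ := by
  have hAv := (A.hasFDerivAt.comp_hasDerivAt τ hv).inner ℝ hv
  have hAu := (A.hasFDerivAt.comp_hasDerivAt τ hu).norm_sq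
  refine ((hAv.add (hAu.const_mul (c ^ 2))).div_const 2).congr_deriv ?_
  simp only [Function.comp_apply, hA.apply_clm, real_inner_comm (A v')]
  ring

theorem dampedWaveEnergy_deriv_le {A : H →L[ℝ] H} (hA : (A : H →ₗ[ℝ] H).IsSymmetric)
    {b c : ℝ} (hb : 0 < b) {u v v' g : H} (h : v' + b • A v + c ^ 2 • A u = -g) :
    ⟪A v', v⟫ + c ^ 2 * ⟪A u, A v⟫ ≤ 1 / (2 * b) * ‖g‖ ^ 2 - b / 2 * ‖A v‖ ^ 2 := by
  have hv' : v' = -g - b • A v - c ^ 2 • A u := by rw [← h]; abel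
  have hinner : ⟪A v', v⟫ + c ^ 2 * ⟪A u, A v⟫ = -⟪g, A v⟫ - b * ‖A v‖ ^ 2 := by
    rw [hA.apply_clm, hv']
    simp only [inner_sub_left, inner_neg_left, real_inner_smul_left, real_inner_self_eq_norm_sq]
    ring
  have hyoung : ‖g‖ * ‖A v‖ ≤ 1 / (2 * b) * ‖g‖ ^ 2 + b / 2 * ‖A v‖ ^ 2 := by
    have := sq_nonneg (‖g‖ - b * ‖A v‖)
    field_simp
    nlinarith
  rw [hinner]
  linarith [neg_le_of_abs_le (abs_real_inner_le_norm g (A v))]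

theorem dampedWaveEnergy_add_integral_le {A : H →L[ℝ] H} (hA : (A : H →ₗ[ℝ] H).IsSymmetric)
    {b c t : ℝ} (hb : 0 < b) (ht : 0 ≤ t) {u v v' g : ℝ → H}
    (hu : ∀ τ, HasDerivAt u (v τ) τ) (hv : ∀ τ, HasDerivAt v (v' τ) τ) (hg : Continuous g)
    (heq : ∀ τ ∈ Ioo 0 t, v' τ + b • A (v τ) + c ^ 2 • A (u τ) = -g τ) :
    dampedWaveEnergy A c (u t) (v t) + b / 2 * ∫ τ in Ioc 0 t, ‖A (v τ)‖ ^ 2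
      ≤ dampedWaveEnergy A c (u 0) (v 0) + 1 / (2 * b) * ∫ τ in Ioc 0 t, ‖g τ‖ ^ 2 := by
  have hvc : Continuous v := continuous_iff_continuousAt.2 fun τ => (hv τ).continuousAt
  have hAv : Continuous fun τ => ‖A (v τ)‖ ^ 2 := by fun_prop
  have hg2 : Continuous fun τ => ‖g τ‖ ^ 2 := by fun_prop
  have hE τ := hasDerivAt_dampedWaveEnergy hA c (hu τ) (hv τ)
  have key := intervalIntegral.sub_le_integral_of_hasDeriv_right_of_le ht
    (continuous_iff_continuousAt.2 fun τ => (hE τ).continuousAt).continuousOn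
    (fun τ _ => (hE τ).hasDerivWithinAt)
    (φ := fun τ => 1 / (2 * b) * ‖g τ‖ ^ 2 - b / 2 * ‖A (v τ)‖ ^ 2)
    ((hg2.const_mul _).sub (hAv.const_mul _)).integrableOn_Icc
    (fun τ hτ => dampedWaveEnergy_deriv_le hA hb (heq τ hτ))
  rw [intervalIntegral.integral_of_le ht, integral_sub (hg2.const_mul _).integrableOn_Ioc
    (hAv.const_mul _).integrableOn_Ioc, integral_const_mul, integral_const_mul] at key
  linarith

theorem westervelt_eq_deriv {A : H →L[ℝ] H} {b c τ : ℝ} {x₀ x₁ x₂ g : ℝ → H} {y₁ y₂ y₃ g₁ : H}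
    (h₀ : HasDerivAt x₀ y₁ τ) (h₁ : HasDerivAt x₁ y₂ τ) (h₂ : HasDerivAt x₂ y₃ τ)
    (hg : HasDerivAt g g₁ τ)
    (heq : ∀ᶠ s in nhds τ, x₂ s + b • A (x₁ s) + c ^ 2 • A (x₀ s) = -g s) :
    y₃ + b • A y₂ + c ^ 2 • A y₁ = -g₁ := by
  have hlhs := ((h₂.add ((A.hasFDerivAt.comp_hasDerivAt τ h₁).const_smul b)).add
    ((A.hasFDerivAt.comp_hasDerivAt τ h₀).const_smul (c ^ 2)))
  exact hlhs.unique (hg.neg.congr_of_eventuallyEq heq)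

theorem westervelt_eq_deriv_of_contDiff {A : H →L[ℝ] H} {b c T : ℝ} {f w : ℝ → H}
    (hf : ContDiff ℝ 1 f) (hw : ContDiff ℝ 3 w)
    (heq : ∀ τ ∈ Ioo 0 T, iteratedDeriv 2 w τ + b • A (deriv w τ) + c ^ 2 • A (w τ) = -f τ) :
    ∀ τ ∈ Ioo 0 T,
      iteratedDeriv 3 w τ + b • A (iteratedDeriv 2 w τ) + c ^ 2 • A (deriv w τ) = -deriv f τ := by
  intro τ hτ
  refine westervelt_eq_deriv ?_ ?_ (hw.hasDerivAt_iteratedDeriv (k := 2) (by norm_num) τ) ?_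
    (Filter.eventually_of_mem (Ioo_mem_nhds hτ.1 hτ.2) heq)
  · simpa using hw.hasDerivAt_iteratedDeriv (k := 0) (by norm_num) τ
  · simpa using hw.hasDerivAt_iteratedDeriv (k := 1) (by norm_num) τ
  · simpa using hf.hasDerivAt_iteratedDeriv (k := 0) (by norm_num) τ

noncomputable def westerveltEnergy (A : H →L[ℝ] H) (c : ℝ) (w : ℝ → H) (t : ℝ) : ℝ :=
  dampedWaveEnergy A c (deriv w t) (iteratedDeriv 2 w t) + dampedWaveEnergy A c (w t) (deriv w t)

theorem westerveltEnergy_add_integral_le {A : H →L[ℝ] H} (hA : (A : H →ₗ[ℝ] H).IsSymmetric)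
    {b c T t : ℝ} (hb : 0 < b) {f w : ℝ → H} (hf : ContDiff ℝ 1 f) (hw : ContDiff ℝ 3 w)
    (heq : ∀ τ ∈ Ioo 0 T, iteratedDeriv 2 w τ + b • A (deriv w τ) + c ^ 2 • A (w τ) = -f τ)
    (ht : t ∈ Ioo 0 T) :
    westerveltEnergy A c w t
        + b / 2 * ∫ τ in Ioc 0 t, (‖A (iteratedDeriv 2 w τ)‖ ^ 2 + ‖A (deriv w τ)‖ ^ 2)
      ≤ westerveltEnergy A c w 0 + 1 / (2 * b) * ∫ τ in Ioc 0 t, (‖deriv f τ‖ ^ 2 + ‖f τ‖ ^ 2) := by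
  have hw₀ τ : HasDerivAt w (deriv w τ) τ := by
    simpa using hw.hasDerivAt_iteratedDeriv (k := 0) (by norm_num) τ
  have hw₁ τ : HasDerivAt (deriv w) (iteratedDeriv 2 w τ) τ := by
    simpa using hw.hasDerivAt_iteratedDeriv (k := 1) (by norm_num) τ
  have hw₂ τ := hw.hasDerivAt_iteratedDeriv (k := 2) (by norm_num) τ
  have hIoo : Ioo 0 t ⊆ Ioo 0 T := Ioo_subset_Ioo_right ht.2.le
  have h₀ := dampedWaveEnergy_add_integral_le hA hb ht.1.le hw₀ hw₁ hf.continuous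
    fun τ hτ => heq τ (hIoo hτ)
  have h₁ := dampedWaveEnergy_add_integral_le hA hb ht.1.le hw₁ hw₂ (hf.continuous_deriv le_rfl)
    fun τ hτ => westervelt_eq_deriv_of_contDiff hf hw heq τ (hIoo hτ)
  have hf'c := hf.continuous_deriv le_rfl
  have hw'c := hw.continuous_deriv (by norm_num)
  have hw''c := hw.continuous_iteratedDeriv 2 (by norm_num)
  rw [integral_add (Continuous.integrableOn_Ioc (by fun_prop))
      (Continuous.integrableOn_Ioc (by fun_prop)),
    integral_add (Continuous.integrableOn_Ioc (by fun_prop))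
      (Continuous.integrableOn_Ioc (by fun_prop)), mul_add, mul_add, westerveltEnergy,
    westerveltEnergy]
  linarith

theorem exists_westervelt_dissipation_bound {A Ahalf : H →L[ℝ] H} {m : ℝ} (hm : 0 < m)
    (hcoer : ∀ x, m * ‖x‖ ^ 2 ≤ ⟪A x, x⟫) (hhalf : ∀ x, ‖Ahalf x‖ ^ 2 = ⟪A x, x⟫) (b : ℝ)
    {c : ℝ} (hc : c ≠ 0) :
    ∃ K > 0, ∀ {x₀ x₁ x₂ x₃ g₀ g₁ : H}, x₂ + b • A x₁ + c ^ 2 • A x₀ = -g₀ →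
      x₃ + b • A x₂ + c ^ 2 • A x₁ = -g₁ →
      ‖x₃‖ ^ 2 + ‖Ahalf x₂‖ ^ 2 + ‖A x₁‖ ^ 2 + ‖A x₀‖ ^ 2
        ≤ K * (‖A x₂‖ ^ 2 + ‖A x₁‖ ^ 2 + (‖g₁‖ ^ 2 + ‖g₀‖ ^ 2)) := by
  refine ⟨3 * (1 + b ^ 2 + (c ^ 2) ^ 2) + 1 / m + 1 + 3 * (1 + 1 / m ^ 2 + b ^ 2) / (c ^ 2) ^ 2,
    by positivity, fun {x₀ x₁ x₂ x₃ g₀ g₁} h₀ h₁ => ?_⟩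
  have hx₂ : ‖x₂‖ ^ 2 ≤ ‖A x₂‖ ^ 2 / m ^ 2 := by
    rw [le_div_iff₀ (by positivity), ← mul_pow, mul_comm]
    gcongr
    exact mul_norm_le_norm_apply_of_coercive hcoer x₂
  have hhalf₂ : ‖Ahalf x₂‖ ^ 2 ≤ ‖A x₂‖ ^ 2 / m := by
    rw [hhalf, le_div_iff₀ hm]
    nlinarith [real_inner_le_norm (A x₂) x₂, mul_norm_le_norm_apply_of_coercive hcoer x₂,
      norm_nonneg (A x₂), hcoer x₂]
  have hx₃ : ‖x₃‖ ^ 2 ≤ 3 * (‖g₁‖ ^ 2 + b ^ 2 * ‖A x₂‖ ^ 2 + (c ^ 2) ^ 2 * ‖A x₁‖ ^ 2) := by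
    have hsum : x₃ = -g₁ + (-b) • A x₂ + (-c ^ 2) • A x₁ := by rw [← h₁]; module
    have := norm_add₃_sq_le (-g₁) ((-b) • A x₂) ((-c ^ 2) • A x₁)
    rwa [← hsum, norm_neg, norm_smul_sq, norm_smul_sq, neg_sq, neg_sq] at this
  have hx₀ :
      ‖A x₀‖ ^ 2 ≤ 3 * (‖g₀‖ ^ 2 + ‖A x₂‖ ^ 2 / m ^ 2 + b ^ 2 * ‖A x₁‖ ^ 2) / (c ^ 2) ^ 2 := by
    have hsum : c ^ 2 • A x₀ = -g₀ + -x₂ + (-b) • A x₁ := by rw [← h₀]; module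
    have := norm_add₃_sq_le (-g₀) (-x₂) ((-b) • A x₁)
    rw [← hsum, norm_neg, norm_neg, norm_smul_sq, norm_smul_sq, neg_sq] at this
    rw [le_div_iff₀ (by positivity)]
    linarith
  set Q := ‖A x₂‖ ^ 2 + ‖A x₁‖ ^ 2 + (‖g₁‖ ^ 2 + ‖g₀‖ ^ 2)
  calc ‖x₃‖ ^ 2 + ‖Ahalf x₂‖ ^ 2 + ‖A x₁‖ ^ 2 + ‖A x₀‖ ^ 2
      ≤ 3 * (‖g₁‖ ^ 2 + b ^ 2 * ‖A x₂‖ ^ 2 + (c ^ 2) ^ 2 * ‖A x₁‖ ^ 2) + ‖A x₂‖ ^ 2 / m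
        + ‖A x₁‖ ^ 2
        + 3 * (‖g₀‖ ^ 2 + ‖A x₂‖ ^ 2 / m ^ 2 + b ^ 2 * ‖A x₁‖ ^ 2) / (c ^ 2) ^ 2 := by
        gcongr
    _ ≤ 3 * (Q + b ^ 2 * Q + (c ^ 2) ^ 2 * Q) + Q / m + Q
        + 3 * (Q + Q / m ^ 2 + b ^ 2 * Q) / (c ^ 2) ^ 2 := by
        gcongr <;> linarith [sq_nonneg ‖A x₂‖, sq_nonneg ‖A x₁‖, sq_nonneg ‖g₁‖, sq_nonneg ‖g₀‖]
    _ = _ := by ring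

theorem exists_integral_westervelt_dissipation_le {A Ahalf : H →L[ℝ] H} {m : ℝ} (hm : 0 < m)
    (hcoer : ∀ x, m * ‖x‖ ^ 2 ≤ ⟪A x, x⟫) (hhalf : ∀ x, ‖Ahalf x‖ ^ 2 = ⟪A x, x⟫) (b : ℝ)
    {c : ℝ} (hc : c ≠ 0) :
    ∃ K > 0, ∀ {T : ℝ} {f w : ℝ → H}, ContDiff ℝ 1 f → ContDiff ℝ 3 w →
      (∀ τ ∈ Ioo 0 T, iteratedDeriv 2 w τ + b • A (deriv w τ) + c ^ 2 • A (w τ) = -f τ) →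
      ∀ t ∈ Ioo 0 T,
        ∫ τ in Ioc 0 t, (‖iteratedDeriv 3 w τ‖ ^ 2 + ‖Ahalf (iteratedDeriv 2 w τ)‖ ^ 2
            + ‖A (deriv w τ)‖ ^ 2 + ‖A (w τ)‖ ^ 2)
          ≤ K * ((∫ τ in Ioc 0 t, (‖A (iteratedDeriv 2 w τ)‖ ^ 2 + ‖A (deriv w τ)‖ ^ 2))
            + ∫ τ in Ioc 0 t, (‖deriv f τ‖ ^ 2 + ‖f τ‖ ^ 2)) := by
  obtain ⟨K, hK, hbound⟩ := exists_westervelt_dissipation_bound hm hcoer hhalf b hc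
  refine ⟨K, hK, fun {T f w} hf hw heq t ht => ?_⟩
  have hf'c := hf.continuous_deriv le_rfl
  have hw'c := hw.continuous_deriv (by norm_num)
  have hw''c := hw.continuous_iteratedDeriv 2 (by norm_num)
  have hIoc : Ioc 0 t ⊆ Ioo 0 T := fun τ hτ => ⟨hτ.1, hτ.2.trans_lt ht.2⟩
  rw [← integral_add (Continuous.integrableOn_Ioc (by fun_prop))
    (Continuous.integrableOn_Ioc (by fun_prop)), ← integral_const_mul]
  refine integral_mono_of_nonneg (ae_of_all _ fun τ => by positivity)
    (Continuous.integrableOn_Ioc (by fun_prop)) ((ae_restrict_iff' measurableSet_Ioc).2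
      (ae_of_all _ fun τ hτ => hbound (heq τ (hIoc hτ))
        (westervelt_eq_deriv_of_contDiff hf hw heq τ (hIoc hτ))))

theorem E1_le_mul_westerveltEnergy {A Ahalf : H →L[ℝ] H}
    (hhalf : ∀ x, ‖Ahalf x‖ ^ 2 = ⟪A x, x⟫) {c : ℝ} (hc : c ≠ 0) (w : ℝ → H) (t : ℝ) :
    E1 A Ahalf w t ≤ (1 + (c ^ 2)⁻¹) * westerveltEnergy A c w t := by
  have hc2 : 0 < c ^ 2 := by positivity
  have hκ : (1 + (c ^ 2)⁻¹) * c ^ 2 = c ^ 2 + 1 := by field_simp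
  simp only [E1, westerveltEnergy, dampedWaveEnergy, ← hhalf]
  nlinarith [sq_nonneg ‖Ahalf (iteratedDeriv 2 w t)‖, sq_nonneg ‖Ahalf (deriv w t)‖,
    sq_nonneg ‖A (deriv w t)‖, sq_nonneg ‖A (w t)‖, inv_pos.2 hc2]

theorem westerveltEnergy_le_mul_E1 {A Ahalf : H →L[ℝ] H} (hS : (Ahalf : H →ₗ[ℝ] H).IsSymmetric)
    (hSS : ∀ x, Ahalf (Ahalf x) = A x) (c : ℝ) (w : ℝ → H) (t : ℝ) :
    westerveltEnergy A c w t ≤ (1 + c ^ 2 * (1 + ‖Ahalf‖ ^ 2)) * E1 A Ahalf w t := by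
  set K := c ^ 2 * (1 + ‖Ahalf‖ ^ 2)
  have hA : c ^ 2 * ‖A (deriv w t)‖ ^ 2 ≤ K * ‖Ahalf (deriv w t)‖ ^ 2 := by
    have : ‖A (deriv w t)‖ ≤ ‖Ahalf‖ * ‖Ahalf (deriv w t)‖ := hSS _ ▸ Ahalf.le_opNorm _
    calc c ^ 2 * ‖A (deriv w t)‖ ^ 2 ≤ c ^ 2 * (‖Ahalf‖ * ‖Ahalf (deriv w t)‖) ^ 2 := by gcongr
      _ ≤ K * ‖Ahalf (deriv w t)‖ ^ 2 := by
        nlinarith [mul_nonneg (sq_nonneg c) (sq_nonneg ‖Ahalf (deriv w t)‖)]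
  have hw : c ^ 2 * ‖A (w t)‖ ^ 2 ≤ K * ‖A (w t)‖ ^ 2 := by
    gcongr; exact le_mul_of_one_le_right (sq_nonneg c) (by simp)
  have hw₂ : 0 ≤ K * ‖Ahalf (iteratedDeriv 2 w t)‖ ^ 2 := by positivity
  simp only [E1, westerveltEnergy, dampedWaveEnergy, ← norm_apply_sq_eq_inner_of_comp_self hS hSS]
  linarith [sq_nonneg ‖A (w t)‖]

end

theorem westervelt_energy_estimate_general
    {H : Type*} [NormedAddCommGroup H] [InnerProductSpace ℝ H]
    (A Ahalf : H →L[ℝ] H)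
    (hAsym : ∀ x y : H, ⟪A x, y⟫ = ⟪x, A y⟫)
    (hAhalfsym : ∀ x y : H, ⟪Ahalf x, y⟫ = ⟪x, Ahalf y⟫)
    (hhalf : ∀ x : H, Ahalf (Ahalf x) = A x)
    (hspec : spectrum ℝ A ⊆ Set.Ioi (0 : ℝ))
    (b c : ℝ) (hb : 0 < b) (hc : 0 < c) :
    ∃ b1 : ℝ, 0 < b1 ∧ ∃ c1 : ℝ, 0 < c1 ∧
      ∀ T : ℝ, 0 < T → ∀ f w : ℝ → H,
        ContDiff ℝ 1 f → ContDiff ℝ 3 w →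
        IntegrableOn (fun τ => ‖f τ‖^2 + ‖deriv f τ‖^2) (Set.Ioc 0 T) →
        (∀ t ∈ Set.Ioo 0 T,
          iteratedDeriv 2 w t + b • A (deriv w t) + c^2 • A (w t) = - f t) →
        ∀ t ∈ Set.Ioo 0 T,
          E1 A Ahalf w t + b1 * ∫ τ in Set.Ioc 0 t,
              (‖iteratedDeriv 3 w τ‖^2 + ‖Ahalf (iteratedDeriv 2 w τ)‖^2
                + ‖A (deriv w τ)‖^2 + ‖A (w τ)‖^2)
            ≤ c1 * (E1 A Ahalf w 0
                + ∫ τ in Set.Ioc 0 t, (‖deriv f τ‖^2 + ‖f τ‖^2)) := by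
  obtain ⟨m, hm, hcoer⟩ :=
    ContinuousLinearMap.exists_pos_mul_sq_le_inner_of_spectrum_subset_Ioi hAsym hspec
  have hhalf_sq := norm_apply_sq_eq_inner_of_comp_self hAhalfsym hhalf
  obtain ⟨K, hK, hdiss⟩ := exists_integral_westervelt_dissipation_le hm hcoer hhalf_sq b hc.ne'
  refine ⟨(1 + (c ^ 2)⁻¹) * b / (2 * K), by positivity,
    (1 + (c ^ 2)⁻¹) * (1 + c ^ 2 * (1 + ‖Ahalf‖ ^ 2) + 1 / (2 * b) + b / 2), by positivity, ?_⟩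
  intro T _ f w hf hw _ heq t ht
  have hG := westerveltEnergy_add_integral_le hAsym hb hf hw heq ht
  have hD := hdiss hf hw heq t ht
  have hEt := E1_le_mul_westerveltEnergy hhalf_sq hc.ne' w t
  have hG0 := westerveltEnergy_le_mul_E1 hAhalfsym hhalf c w 0
  set κ := 1 + (c ^ 2)⁻¹
  set IS := ∫ τ in Ioc 0 t, (‖A (iteratedDeriv 2 w τ)‖ ^ 2 + ‖A (deriv w τ)‖ ^ 2)
  set IF := ∫ τ in Ioc 0 t, (‖deriv f τ‖ ^ 2 + ‖f τ‖ ^ 2)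
  set ID := ∫ τ in Ioc 0 t, (‖iteratedDeriv 3 w τ‖ ^ 2 + ‖Ahalf (iteratedDeriv 2 w τ)‖ ^ 2
    + ‖A (deriv w τ)‖ ^ 2 + ‖A (w τ)‖ ^ 2)
  have hκ : 0 < κ := by positivity
  have hIF : 0 ≤ IF := setIntegral_nonneg measurableSet_Ioc fun _ _ => by positivity
  have hE0 : 0 ≤ E1 A Ahalf w 0 := by unfold E1; positivity
  have hDb : κ * b / (2 * K) * ID ≤ κ * b / 2 * (IS + IF) := by
    calc _ ≤ κ * b / (2 * K) * (K * (IS + IF)) := by gcongr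
      _ = κ * b / 2 * (IS + IF) := by field_simp
  have hE0' : 0 ≤ κ * (1 / (2 * b) + b / 2) * E1 A Ahalf w 0 := by positivity
  have hIF' : 0 ≤ κ * (1 + c ^ 2 * (1 + ‖Ahalf‖ ^ 2)) * IF := by positivity
  linarith [mul_le_mul_of_nonneg_left hG hκ.le, mul_le_mul_of_nonneg_left hG0 hκ.le]

/-- Lemma 3.7 / [BrKa14, Lemma 4.3]: energy estimate for solutions of
`D_w w = −f`, `D_w = ∂_t² + b𝒜∂_t + c²𝒜`. -/
theorem westervelt_energy_estimate
    {H : Type*} [NormedAddCommGroup H] [InnerProductSpace ℝ H] [CompleteSpace H]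
    [TopologicalSpace.SeparableSpace H]
    (A Ahalf : H →L[ℝ] H)
    (hAsym : ∀ x y : H, ⟪A x, y⟫ = ⟪x, A y⟫)
    (hAhalfsym : ∀ x y : H, ⟪Ahalf x, y⟫ = ⟪x, Ahalf y⟫)
    (hhalf : ∀ x : H, Ahalf (Ahalf x) = A x)
    (hspec : spectrum ℝ A ⊆ Set.Ioi (0 : ℝ))
    (heig : ∀ μ ∈ spectrum ℝ A, ∃ x : H, x ≠ 0 ∧ A x = μ • x)
    (b c : ℝ) (hb : 0 < b) (hc : 0 < c) :
    ∃ b1 : ℝ, 0 < b1 ∧ ∃ c1 : ℝ, 0 < c1 ∧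
      ∀ T : ℝ, 0 < T → ∀ f w : ℝ → H,
        ContDiff ℝ 1 f → ContDiff ℝ 3 w →
        IntegrableOn (fun τ => ‖f τ‖^2 + ‖deriv f τ‖^2) (Set.Ioc 0 T) →
        (∀ t ∈ Set.Ioo 0 T,
          iteratedDeriv 2 w t + b • A (deriv w t) + c^2 • A (w t) = - f t) →
        ∀ t ∈ Set.Ioo 0 T,
          E1 A Ahalf w t + b1 * ∫ τ in Set.Ioc 0 t,
              (‖iteratedDeriv 3 w τ‖^2 + ‖Ahalf (iteratedDeriv 2 w τ)‖^2
                + ‖A (deriv w τ)‖^2 + ‖A (w τ)‖^2)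
            ≤ c1 * (E1 A Ahalf w 0
                + ∫ τ in Set.Ioc 0 t, (‖deriv f τ‖^2 + ‖f τ‖^2)) :=
  westervelt_energy_estimate_general A Ahalf hAsym hAhalfsym hhalf hspec b c hb hc
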